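/- Let k be an arbitrary field and let A be a finite-dimensional commutative Frobenius algebra over k, with comultiplication Δ, counit ε and multiplication m. If the window endomorphism m ∘ Δ : A → A is bijective, then A is separable in the following sense: for every field extension K of k, the K-algebra K ⊗[k] A is a semisimple ring; in particular A itself is a semisimple ring. -/

import Mathlib

/-!
The Frobenius condition evaluated at `a ⊗ 1` gives `Δ a = (a ⊗ 1) * Δ 1`, and cocommutativity
turns this into `Δ a = (1 ⊗ a) * Δ 1`. So the window is multiplication by `m (Δ 1)`, which is
therefore a unit, and `Δ 1` rescaled by its inverse is a separability idempotent: `A` is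
formally unramified over `k`. Formal unramifiedness survives base change, and a
finite-dimensional formally unramified algebra over a field is reduced and Artinian, hence
semisimple.
-/

open TensorProduct

namespace Algebra.FormallyUnramified

theorem of_isUnit_lmul' {R A : Type*} [CommRing R] [CommRing A] [Algebra R A]
    [EssFiniteType R A] (t : A ⊗[R] A) (ht : ∀ a : A, (a ⊗ₜ[R] 1) * t = (1 ⊗ₜ a) * t)
    (hunit : IsUnit (TensorProduct.lmul' R t)) : FormallyUnramified R A := by
  obtain ⟨v, hv⟩ := hunit.exists_left_inv
  refine iff_exists_tensorProduct.mpr ⟨(v ⊗ₜ 1) * t, fun a ↦ ?_, ?_⟩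
  · rw [mul_left_comm, sub_mul, ht, sub_self, mul_zero]
  · rw [map_mul, TensorProduct.lmul'_apply_tmul, mul_one, hv]

theorem isSemisimpleRing (K B : Type*) [Field K] [CommRing B] [Algebra K B]
    [FiniteDimensional K B] [FormallyUnramified K B] : IsSemisimpleRing B :=
  have := IsArtinianRing.of_finite K B
  have := isReduced_of_field K B
  IsArtinianRing.isSemisimpleRing_of_isReduced B

end Algebra.FormallyUnramified

section Frobenius

variable {R A : Type*} [CommRing R] [CommRing A] [Algebra R A] {Δ : A →ₗ[R] A ⊗[R] A}

theorem lTensor_mul'_assoc_tmul_one (E : A ⊗[R] A) :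
    LinearMap.lTensor A (LinearMap.mul' R A) (TensorProduct.assoc R A A A (E ⊗ₜ 1)) = E := by
  induction E using TensorProduct.induction_on with
  | zero => simp
  | tmul x y => simp
  | add x y hx hy => simp_all [add_tmul]

theorem rTensor_mul'_assoc_symm_tmul (a : A) (E : A ⊗[R] A) :
    LinearMap.rTensor A (LinearMap.mul' R A) ((TensorProduct.assoc R A A A).symm (a ⊗ₜ E)) =
      (a ⊗ₜ 1) * E := by
  induction E using TensorProduct.induction_on with
  | zero => simp
  | tmul x y => simp
  | add x y hx hy => simp_all [tmul_add, mul_add]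

variable (hfrob : (LinearMap.lTensor A (LinearMap.mul' R A)).comp
        ((TensorProduct.assoc R A A A).toLinearMap.comp (LinearMap.rTensor A Δ))
      = (LinearMap.rTensor A (LinearMap.mul' R A)).comp
        ((TensorProduct.assoc R A A A).symm.toLinearMap.comp (LinearMap.lTensor A Δ)))
include hfrob

theorem comul_eq_tmul_one_mul_comul_one (a : A) : Δ a = (a ⊗ₜ[R] 1) * Δ 1 := by
  simpa [lTensor_mul'_assoc_tmul_one, rTensor_mul'_assoc_symm_tmul] using
    DFunLike.congr_fun hfrob (a ⊗ₜ[R] 1)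

theorem comul_eq_one_tmul_mul_comul_one
    (hcocomm : (TensorProduct.comm R A A).toLinearMap.comp Δ = Δ) (a : A) :
    Δ a = (1 ⊗ₜ[R] a) * Δ 1 := by
  have hcomm (x : A) : Algebra.TensorProduct.comm R A A (Δ x) = Δ x := congr($hcocomm x)
  simpa [hcomm] using
    congr(Algebra.TensorProduct.comm R A A $(comul_eq_tmul_one_mul_comul_one hfrob a))

theorem mul'_comul (a : A) : LinearMap.mul' R A (Δ a) = a * LinearMap.mul' R A (Δ 1) := by
  change Algebra.TensorProduct.lmul' R (Δ a) = a * Algebra.TensorProduct.lmul' R (Δ 1)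
  rw [comul_eq_tmul_one_mul_comul_one hfrob a, map_mul, Algebra.TensorProduct.lmul'_apply_tmul,
    mul_one]

theorem isUnit_mul'_comul_one (hsurj : Function.Surjective ((LinearMap.mul' R A).comp Δ)) :
    IsUnit (LinearMap.mul' R A (Δ 1)) := by
  obtain ⟨v, hv⟩ := hsurj 1
  exact .of_mul_eq_one_right v (by rw [← mul'_comul hfrob]; exact hv)

end Frobenius

theorem separable_of_window_bijective_general
    {k : Type*} [Field k]
    {A : Type*} [CommRing A] [Algebra k A] [FiniteDimensional k A]
    (Δ : A →ₗ[k] A ⊗[k] A)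
    (hcocomm : (TensorProduct.comm k A A).toLinearMap.comp Δ = Δ)
    (hfrob : (LinearMap.lTensor A (LinearMap.mul' k A)).comp
        ((TensorProduct.assoc k A A A).toLinearMap.comp (LinearMap.rTensor A Δ))
      = (LinearMap.rTensor A (LinearMap.mul' k A)).comp
        ((TensorProduct.assoc k A A A).symm.toLinearMap.comp (LinearMap.lTensor A Δ)))
    (hwindow : Function.Bijective ((LinearMap.mul' k A).comp Δ)) :
    (∀ (K : Type*) [Field K] [Algebra k K], IsSemisimpleRing (K ⊗[k] A)) ∧
      IsSemisimpleRing A := by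
  have : Algebra.FormallyUnramified k A :=
    .of_isUnit_lmul' (Δ 1)
      (fun a ↦ by rw [← comul_eq_tmul_one_mul_comul_one hfrob,
        ← comul_eq_one_tmul_mul_comul_one hfrob hcocomm])
      (isUnit_mul'_comul_one hfrob hwindow.surjective)
  exact ⟨fun K _ _ ↦ Algebra.FormallyUnramified.isSemisimpleRing K (K ⊗[k] A),
    Algebra.FormallyUnramified.isSemisimpleRing k A⟩

/-- Let `k` be an arbitrary field and `A` a finite-dimensional commutative
Frobenius algebra over `k`.  If the window endomorphism `m ∘ Δ : A → A` is bijective, then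
`A` is separable: for every field extension `K` of `k`, the `K`-algebra `K ⊗[k] A` is a
semisimple ring; in particular `A` itself is a semisimple ring. -/
theorem separable_of_window_bijective
    {k : Type*} [Field k]
    {A : Type*} [CommRing A] [Algebra k A] [FiniteDimensional k A]
    (Δ : A →ₗ[k] A ⊗[k] A) (ε : A →ₗ[k] k)
    (hcoassoc : (TensorProduct.assoc k A A A).toLinearMap.comp
        ((LinearMap.rTensor A Δ).comp Δ) = (LinearMap.lTensor A Δ).comp Δ)
    (hcounit_left : (TensorProduct.lid k A).toLinearMap.comp
        ((LinearMap.rTensor A ε).comp Δ) = LinearMap.id)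
    (hcounit_right : (TensorProduct.rid k A).toLinearMap.comp
        ((LinearMap.lTensor A ε).comp Δ) = LinearMap.id)
    (hcocomm : (TensorProduct.comm k A A).toLinearMap.comp Δ = Δ)
    (hfrob : (LinearMap.lTensor A (LinearMap.mul' k A)).comp
        ((TensorProduct.assoc k A A A).toLinearMap.comp (LinearMap.rTensor A Δ))
      = (LinearMap.rTensor A (LinearMap.mul' k A)).comp
        ((TensorProduct.assoc k A A A).symm.toLinearMap.comp (LinearMap.lTensor A Δ)))
    (hwindow : Function.Bijective ((LinearMap.mul' k A).comp Δ)) :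
    (∀ (K : Type*) [Field K] [Algebra k K], IsSemisimpleRing (K ⊗[k] A)) ∧
      IsSemisimpleRing A :=
  separable_of_window_bijective_general Δ hcocomm hfrob hwindow
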